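/- The recurrence T(n) ≤ (n/b)·T(b) + C·n with b = log₂ n and T(n) = O(n) for n ≤ 2 has solution T(n) ≤ n · c^{log* n} for a suitable constant c, i.e., T(n) = n · 2^{O(log* n)}. -/

import Mathlib

/-- The iterated logarithm: the number of times ⌈log₂⌉ must be applied to
reach a value at most 2. -/
def logStar (n : ℕ) : ℕ :=
  if n ≤ 2 then 0 else logStar (Nat.clog 2 n) + 1
termination_by n
decreasing_by
  have h2 := (n - 1).lt_two_pow_self
  have h1 : n ≤ 2 ^ (n - 1) := by omega
  have h3 := (Nat.clog_le_iff_le_pow (by norm_num : (1:ℕ) < 2)).mpr h1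
  omega

/-!
With `c = C + 2`, induct on `n`. For `n > 2` put `b = ⌈log₂ n⌉ < n`; the inductive bound
`T b ≤ c^(log* b + 1) · b` together with `⌈n / b⌉ · b ≤ 2n` turns the recurrence into
`T n ≤ 2n · c^(log* b + 1) + C n ≤ (2 + C) · c^(log* b + 1) · n = c^(log* n + 1) · n`.
-/

theorem Nat.clog_lt_self {b n : ℕ} (hb : 1 < b) (hn : 1 ≤ n) : Nat.clog b n < n := by
  have hpow : n ≤ b ^ (n - 1) :=
    calc n ≤ 2 ^ (n - 1) := by have := (n - 1).lt_two_pow_self; omega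
      _ ≤ b ^ (n - 1) := Nat.pow_le_pow_left hb _
  have := (Nat.clog_le_iff_le_pow hb).mpr hpow
  omega

theorem logStar_of_le_two {n : ℕ} (hn : n ≤ 2) : logStar n = 0 := by
  rw [logStar, if_pos hn]

theorem logStar_of_two_lt {n : ℕ} (hn : 2 < n) : logStar n = logStar (Nat.clog 2 n) + 1 := by
  rw [logStar, if_neg (by omega)]

theorem Nat.add_sub_one_div_mul_le_two_mul {n b : ℕ} (hb : b ≤ n + 1) :
    (n + b - 1) / b * b ≤ 2 * n := by
  have := Nat.div_mul_le_self (n + b - 1) b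
  omega

/-- One unfolding of the recurrence, with `p` the bound `c^(log* b + 1)` on `T b / b`. -/
theorem le_mul_add_two_mul_of_recurrence {C p k b n t tb : ℝ} (hC : 0 ≤ C) (hp : 1 ≤ p)
    (hn : 0 ≤ n) (hk : 0 ≤ k) (hkb : k * b ≤ 2 * n) (htb : tb ≤ p * b)
    (ht : t ≤ k * tb + C * n) : t ≤ p * (C + 2) * n :=
  calc t ≤ k * (p * b) + C * n := ht.trans (by gcongr)
    _ = p * (k * b) + C * n := by ring
    _ ≤ p * (2 * n) + p * (C * n) :=
        add_le_add (mul_le_mul_of_nonneg_left hkb (by linarith))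
          (le_mul_of_one_le_left (mul_nonneg hC hn) hp)
    _ = p * (C + 2) * n := by ring

theorem stmt10_general (C : ℝ) (hC : 0 < C) (T : ℕ → ℝ)
    (hbase : ∀ n ≤ 2, T n ≤ C)
    (hrec : ∀ n > 2, T n ≤
      (((n + Nat.clog 2 n - 1) / Nat.clog 2 n : ℕ) : ℝ) * T (Nat.clog 2 n) + C * n) :
    ∃ c : ℝ, 0 < c ∧ ∀ n ≥ 1, T n ≤ c ^ (logStar n + 1) * n := by
  refine ⟨C + 2, by linarith, fun n hn => ?_⟩
  induction n using Nat.strong_induction_on with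
  | _ n ih =>
  have hn1 : (1 : ℝ) ≤ n := by exact_mod_cast hn
  rcases le_or_gt n 2 with hsmall | hlarge
  · rw [logStar_of_le_two hsmall, pow_one]
    nlinarith [hbase n hsmall]
  · set b := Nat.clog 2 n
    have hb : b < n := Nat.clog_lt_self one_lt_two hn
    have hb1 : 1 ≤ b := Nat.clog_pos one_lt_two (by omega)
    have hkb : (((n + b - 1) / b : ℕ) : ℝ) * b ≤ 2 * n := by
      exact_mod_cast Nat.add_sub_one_div_mul_le_two_mul (by omega)
    rw [logStar_of_two_lt hlarge, pow_succ]
    exact le_mul_add_two_mul_of_recurrence hC.le (one_le_pow₀ (by linarith)) (by linarith)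
      (Nat.cast_nonneg _) hkb (ih b hb hb1) (hrec n hlarge)

/-- The recurrence T(n) ≤ ⌈n/⌈log₂ n⌉⌉·T(⌈log₂ n⌉) + C·n (with T ≤ C on
n ≤ 2) has solution T(n) ≤ c^(log* n + 1) · n, i.e. T(n) = n·2^O(log* n). -/
theorem stmt10 (C : ℝ) (hC : 0 < C) (T : ℕ → ℝ)
    (hnonneg : ∀ n, 0 ≤ T n)
    (hbase : ∀ n ≤ 2, T n ≤ C)
    (hrec : ∀ n > 2, T n ≤
      (((n + Nat.clog 2 n - 1) / Nat.clog 2 n : ℕ) : ℝ) * T (Nat.clog 2 n) + C * n) :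
    ∃ c : ℝ, 0 < c ∧ ∀ n ≥ 1, T n ≤ c ^ (logStar n + 1) * n :=
  stmt10_general C hC T hbase hrec
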